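/- Derivability of the rule ~I⁺ for the defining formula: writing N(A) := (A ∧ (A → (A ⤙ A))) ∨ ((A → A) ⤙ A), for every formula A and all sets of assumptions Γ and counter-assumptions Δ, if (Γ;Δ) ⊢⁻ A then (Γ;Δ) ⊢⁺ N(A). -/

import Mathlib

/-- Formulas of Wansing's bi-intuitionistic logic 2Int. -/
inductive TwoInt : Type
  | atom  : ℕ → TwoInt
  | top   : TwoInt
  | bot   : TwoInt
  | and   : TwoInt → TwoInt → TwoInt
  | or    : TwoInt → TwoInt → TwoInt
  | imp   : TwoInt → TwoInt → TwoInt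
  | coimp : TwoInt → TwoInt → TwoInt

open TwoInt

mutual
/-- Proofs in 2Int: `ProvesP Γ Δ A` means `(Γ;Δ) ⊢⁺ A`. -/
inductive ProvesP : Set TwoInt → Set TwoInt → TwoInt → Prop
  | assum {Γ Δ A} : A ∈ Γ → ProvesP Γ Δ A
  | topI {Γ Δ} : ProvesP Γ Δ top
  | botE_p {Γ Δ A} : ProvesP Γ Δ bot → ProvesP Γ Δ A
  | topE_p {Γ Δ A} : ProvesD Γ Δ top → ProvesP Γ Δ A
  | andI_p {Γ Δ A B} : ProvesP Γ Δ A → ProvesP Γ Δ B → ProvesP Γ Δ (and A B)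
  | andE1_p {Γ Δ A B} : ProvesP Γ Δ (and A B) → ProvesP Γ Δ A
  | andE2_p {Γ Δ A B} : ProvesP Γ Δ (and A B) → ProvesP Γ Δ B
  | orI1_p {Γ Δ A B} : ProvesP Γ Δ A → ProvesP Γ Δ (or A B)
  | orI2_p {Γ Δ A B} : ProvesP Γ Δ B → ProvesP Γ Δ (or A B)
  | orE_p {Γ Δ A B C} : ProvesP Γ Δ (or A B) → ProvesP (Γ ∪ {A}) Δ C →
      ProvesP (Γ ∪ {B}) Δ C → ProvesP Γ Δ C
  | andE_p {Γ Δ A B C} : ProvesD Γ Δ (and A B) → ProvesP Γ (Δ ∪ {A}) C →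
      ProvesP Γ (Δ ∪ {B}) C → ProvesP Γ Δ C
  | impI_p {Γ Δ A B} : ProvesP (Γ ∪ {A}) Δ B → ProvesP Γ Δ (imp A B)
  | impE_p {Γ Δ A B} : ProvesP Γ Δ (imp A B) → ProvesP Γ Δ A → ProvesP Γ Δ B
  | impE1_m {Γ Δ A B} : ProvesD Γ Δ (imp A B) → ProvesP Γ Δ A
  | coimpI_p {Γ Δ A B} : ProvesP Γ Δ A → ProvesD Γ Δ B → ProvesP Γ Δ (coimp A B)
  | coimpE1_p {Γ Δ A B} : ProvesP Γ Δ (coimp A B) → ProvesP Γ Δ A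

/-- Dual proofs in 2Int: `ProvesD Γ Δ A` means `(Γ;Δ) ⊢⁻ A`. -/
inductive ProvesD : Set TwoInt → Set TwoInt → TwoInt → Prop
  | cassum {Γ Δ A} : A ∈ Δ → ProvesD Γ Δ A
  | botI {Γ Δ} : ProvesD Γ Δ bot
  | botE_m {Γ Δ A} : ProvesP Γ Δ bot → ProvesD Γ Δ A
  | topE_m {Γ Δ A} : ProvesD Γ Δ top → ProvesD Γ Δ A
  | andI1_m {Γ Δ A B} : ProvesD Γ Δ A → ProvesD Γ Δ (and A B)
  | andI2_m {Γ Δ A B} : ProvesD Γ Δ B → ProvesD Γ Δ (and A B)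
  | andE_m {Γ Δ A B C} : ProvesD Γ Δ (and A B) → ProvesD Γ (Δ ∪ {A}) C →
      ProvesD Γ (Δ ∪ {B}) C → ProvesD Γ Δ C
  | orE_m {Γ Δ A B C} : ProvesP Γ Δ (or A B) → ProvesD (Γ ∪ {A}) Δ C →
      ProvesD (Γ ∪ {B}) Δ C → ProvesD Γ Δ C
  | orI_m {Γ Δ A B} : ProvesD Γ Δ A → ProvesD Γ Δ B → ProvesD Γ Δ (or A B)
  | orE1_m {Γ Δ A B} : ProvesD Γ Δ (or A B) → ProvesD Γ Δ A
  | orE2_m {Γ Δ A B} : ProvesD Γ Δ (or A B) → ProvesD Γ Δ B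
  | impI_m {Γ Δ A B} : ProvesP Γ Δ A → ProvesD Γ Δ B → ProvesD Γ Δ (imp A B)
  | impE2_m {Γ Δ A B} : ProvesD Γ Δ (imp A B) → ProvesD Γ Δ B
  | coimpE2_p {Γ Δ A B} : ProvesP Γ Δ (coimp A B) → ProvesD Γ Δ B
  | coimpI_m {Γ Δ A B} : ProvesD Γ (Δ ∪ {B}) A → ProvesD Γ Δ (coimp A B)
  | coimpE_m {Γ Δ A B} : ProvesD Γ Δ (coimp A B) → ProvesD Γ Δ B → ProvesD Γ Δ A
end

/-- The defining formula `N(A) := (A ∧ (A → (A ⤙ A))) ∨ ((A → A) ⤙ A)` for strong negation. -/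
def strongNeg (A : TwoInt) : TwoInt :=
  or (and A (imp A (coimp A A))) (coimp (imp A A) A)

theorem ProvesP.imp_self {Γ Δ : Set TwoInt} (A : TwoInt) : ProvesP Γ Δ (imp A A) :=
  ProvesP.impI_p (ProvesP.assum (Set.mem_union_right Γ rfl))

theorem strongNeg_introP (A : TwoInt) (Γ Δ : Set TwoInt)
    (h : ProvesD Γ Δ A) : ProvesP Γ Δ (strongNeg A) := by
  exact ProvesP.orI2_p (ProvesP.coimpI_p (ProvesP.imp_self A) h)
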